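/- arXiv:math/0109100 — 7 statements merged into one kernel-verified Lean document; each statement's English description precedes it below -/
import Mathlib

section
/- Fix K > 0. For any unital C*-algebra X, the bounded rank with respect to K is at least the real rank: rr(X) ≤ br_K(X). Concretely: if for every (n+1)-tuple (x_1,...,x_{n+1}) of self-adjoint elements of X and every ε > 0 there exists a K-unessential (n+1)-tuple (y_1,...,y_{n+1}) with ‖x_k − y_k‖ < ε for all k, then X has real rank at most n. -/
/-- A tuple `(y_1,…,y_m)` of self-adjoint elements is `K`-unessential if for every rational
`δ > 0` there is a self-adjoint tuple `(z_1,…,z_m)` with `‖y_k - z_k‖ ≤ δ`, `∑ z_k²`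
invertible, and `‖(∑ z_k²)⁻¹‖ ≤ 1/(K·δ²)`. -/
def KUnessential {X : Type*} [CStarAlgebra X] (K : ℝ) {m : ℕ} (y : Fin m → X) : Prop :=
  ∀ δ : ℚ, 0 < δ → ∃ z : Fin m → X,
    (∀ k, IsSelfAdjoint (z k)) ∧ (∀ k, ‖y k - z k‖ ≤ (δ : ℝ)) ∧
    ∃ b : X, (∑ k, (z k) ^ 2) * b = 1 ∧ b * (∑ k, (z k) ^ 2) = 1 ∧
      ‖b‖ ≤ 1 / (K * (δ : ℝ) ^ 2)

theorem KUnessential.exists_isUnit_sum_sq_near {X : Type*} [CStarAlgebra X] {K : ℝ} {m : ℕ}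
    {y : Fin m → X} (hy : KUnessential K y) {δ : ℝ} (hδ : 0 < δ) :
    ∃ z : Fin m → X, (∀ k, IsSelfAdjoint (z k)) ∧ IsUnit (∑ k, (z k) ^ 2) ∧
      ∀ k, ‖y k - z k‖ < δ := by
  obtain ⟨q, hq_pos, hq_lt⟩ := exists_rat_btwn hδ
  obtain ⟨z, hz, hyz, b, hb_right, hb_left, -⟩ := hy q (by exact_mod_cast hq_pos)
  exact ⟨z, hz, ⟨⟨_, b, hb_right, hb_left⟩, rfl⟩, fun k => (hyz k).trans_lt hq_lt⟩

theorem stmt_5_general {X : Type*} [CStarAlgebra X] (K : ℝ) (n : ℕ)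
    (h : ∀ x : Fin (n + 1) → X, (∀ k, IsSelfAdjoint (x k)) → ∀ ε : ℝ, 0 < ε →
      ∃ y : Fin (n + 1) → X, (∀ k, IsSelfAdjoint (y k)) ∧ KUnessential K y ∧
        ∀ k, ‖x k - y k‖ < ε) :
    ∀ x : Fin (n + 1) → X, (∀ k, IsSelfAdjoint (x k)) → ∀ ε : ℝ, 0 < ε →
      ∃ y : Fin (n + 1) → X, (∀ k, IsSelfAdjoint (y k)) ∧
        IsUnit (∑ k, (y k) ^ 2) ∧ ∀ k, ‖x k - y k‖ < ε := by
  intro x hx ε hε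
  obtain ⟨y, -, hy, hxy⟩ := h x hx (ε / 2) (half_pos hε)
  obtain ⟨z, hz, hz_unit, hyz⟩ := hy.exists_isUnit_sum_sq_near (half_pos hε)
  refine ⟨z, hz, hz_unit, fun k => ?_⟩
  calc ‖x k - z k‖ ≤ ‖x k - y k‖ + ‖y k - z k‖ := norm_sub_le_norm_sub_add_norm_sub _ _ _
    _ < ε / 2 + ε / 2 := add_lt_add (hxy k) (hyz k)
    _ = ε := add_halves ε

/-- `rr(X) ≤ br_K(X)`: if every self-adjoint `(n+1)`-tuple can be approximated by
`K`-unessential self-adjoint `(n+1)`-tuples, then `X` has real rank at most `n`. -/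
theorem stmt_5 {X : Type*} [CStarAlgebra X] (K : ℝ) (hK : 0 < K) (n : ℕ)
    (h : ∀ x : Fin (n + 1) → X, (∀ k, IsSelfAdjoint (x k)) → ∀ ε : ℝ, 0 < ε →
      ∃ y : Fin (n + 1) → X, (∀ k, IsSelfAdjoint (y k)) ∧ KUnessential K y ∧
        ∀ k, ‖x k - y k‖ < ε) :
    ∀ x : Fin (n + 1) → X, (∀ k, IsSelfAdjoint (x k)) → ∀ ε : ℝ, 0 < ε →
      ∃ y : Fin (n + 1) → X, (∀ k, IsSelfAdjoint (y k)) ∧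
        IsUnit (∑ k, (y k) ^ 2) ∧ ∀ k, ‖x k - y k‖ < ε :=
  stmt_5_general K n h
end

section
/- Let (y_1,...,y_m) be a pairwise commuting m-tuple of self-adjoint elements of a unital C*-algebra X such that ∑_{k=1}^m y_k² is invertible. Then (y_1,...,y_m) is K-unessential for every K with 0 < K ≤ 1: for every rational δ > 0 there exist self-adjoint z_1,...,z_m with ‖y_k − z_k‖ ≤ δ for all k, ∑ z_k² invertible, and ‖(∑ z_k²)^{-1}‖ ≤ 1/δ². -/
/-!
Let `a = ∑ yₖ²`, which is positive and invertible, so `σ(a) ⊆ (0, ∞)`, and `t = δ²`.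
Rescale the tuple radially: `zₖ = yₖ · f(a)` with `f(s) = √((s + t) / s)`. Then
`∑ zₖ² = a · f(a)² = a + t`, whose inverse has norm at most `1 / t`. On the other hand
`‖yₖ - zₖ‖² = ‖(1 - f(a)) yₖ² (1 - f(a))‖ ≤ ‖(1 - f(a)) a (1 - f(a))‖`, and this is
`sup_{s ∈ σ(a)} s (1 - f(s))² = sup (√(s + t) - √s)² ≤ t`.
-/

noncomputable def radialFactor (t s : ℝ) : ℝ := √((s + t) / s)

lemma continuousOn_radialFactor (t : ℝ) : ContinuousOn (radialFactor t) {s | s ≠ 0} :=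
  ((continuousOn_id.add continuousOn_const).div continuousOn_id fun _ hs => hs).sqrt

lemma one_le_radialFactor {s t : ℝ} (hs : 0 < s) (ht : 0 ≤ t) : 1 ≤ radialFactor t s :=
  Real.one_le_sqrt.mpr <| (one_le_div hs).mpr (by linarith)

lemma mul_radialFactor_sq {s t : ℝ} (hs : 0 < s) (ht : 0 ≤ t) :
    s * radialFactor t s ^ 2 = s + t := by
  rw [radialFactor, Real.sq_sqrt (by positivity)]
  field_simp

lemma mul_one_sub_radialFactor_sq_le {s t : ℝ} (hs : 0 < s) (ht : 0 ≤ t) :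
    s * (1 - radialFactor t s) ^ 2 ≤ t := by
  nlinarith [mul_radialFactor_sq hs ht, one_le_radialFactor hs ht]

section CStarAlgebra

variable {A : Type*} [CStarAlgebra A] [PartialOrder A] [StarOrderedRing A]

lemma norm_mul_sq_le_of_star_mul_self_le {x a : A} (h : star x * x ≤ a) (c : A) :
    ‖x * c‖ ^ 2 ≤ ‖star c * a * c‖ := by
  calc ‖x * c‖ ^ 2 = ‖star c * (star x * x) * c‖ := by
        rw [sq, ← CStarRing.norm_star_mul_self, star_mul, mul_assoc, mul_assoc, mul_assoc]
    _ ≤ ‖star c * a * c‖ :=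
        CStarAlgebra.norm_le_norm_of_nonneg_of_le
          (star_left_conjugate_nonneg (star_mul_self_nonneg x) c)
          (star_left_conjugate_le_conjugate h c)

lemma exists_inverse_add_algebraMap_of_nonneg {a : A} (ha : 0 ≤ a) {t : ℝ} (ht : 0 < t) :
    ∃ b : A, (a + algebraMap ℝ A t) * b = 1 ∧ b * (a + algebraMap ℝ A t) = 1 ∧
      ‖b‖ ≤ t⁻¹ := by
  have hspec : ∀ s ∈ spectrum ℝ a, 0 ≤ s := fun s hs => spectrum_nonneg_of_nonneg ha hs
  let u := cfcUnits (· + t) a fun s hs => by linarith [hspec s hs]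
  have hu : (u : A) = a + algebraMap ℝ A t := by
    change cfc (· + t) a = _
    rw [cfc_add_const t (fun s => s) a, cfc_id' ℝ a]
  refine ⟨↑u⁻¹, hu ▸ u.mul_inv, hu ▸ u.inv_mul, ?_⟩
  change ‖cfc (fun s => (s + t)⁻¹) a‖ ≤ t⁻¹
  refine norm_cfc_le (by positivity) fun s hs => ?_
  have hst : t ≤ s + t := by linarith [hspec s hs]
  rw [Real.norm_of_nonneg (inv_nonneg.mpr (ht.trans_le hst).le)]
  exact inv_anti₀ ht hst

namespace IsStrictlyPositive

variable {a : A} (ha : IsStrictlyPositive a) {t : ℝ} (ht : 0 ≤ t)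
include ha

lemma continuousOn_radialFactor : ContinuousOn (radialFactor t) (spectrum ℝ a) :=
  (_root_.continuousOn_radialFactor t).mono fun _ hs => (ha.spectrum_pos hs).ne'

include ht

lemma mul_cfc_radialFactor_sq :
    a * cfc (radialFactor t) a ^ 2 = a + algebraMap ℝ A t := by
  have hf := ha.continuousOn_radialFactor (t := t)
  calc a * cfc (radialFactor t) a ^ 2 = cfc (fun s => s * radialFactor t s ^ 2) a := by
        rw [cfc_mul (fun s => s) _ a, cfc_pow _ 2 a, cfc_id' ℝ a]
    _ = cfc (fun s => s + t) a := cfc_congr fun s hs => mul_radialFactor_sq (ha.spectrum_pos hs) ht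
    _ = a + algebraMap ℝ A t := by rw [cfc_add_const t (fun s => s) a, cfc_id' ℝ a]

lemma norm_conj_one_sub_cfc_radialFactor_le :
    ‖star (1 - cfc (radialFactor t) a) * a * (1 - cfc (radialFactor t) a)‖ ≤ t := by
  have hf := ha.continuousOn_radialFactor (t := t)
  have hconj : star (1 - cfc (radialFactor t) a) * a * (1 - cfc (radialFactor t) a) =
      cfc (fun s => (1 - radialFactor t s) * s * (1 - radialFactor t s)) a := by
    rw [cfc_mul (fun s => (1 - radialFactor t s) * s) _ a,
      cfc_mul (fun s => 1 - radialFactor t s) _ a, cfc_sub (fun _ => 1) _ a,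
      cfc_const_one ℝ a, cfc_id' ℝ a, star_sub, star_one, (cfc_predicate (radialFactor t) a).star_eq]
  rw [hconj]
  refine norm_cfc_le ht fun s hs => ?_
  have hs := ha.spectrum_pos hs
  have hsq : (1 - radialFactor t s) * s * (1 - radialFactor t s) =
      s * (1 - radialFactor t s) ^ 2 := by ring
  rw [hsq, Real.norm_of_nonneg (by positivity)]
  exact mul_one_sub_radialFactor_sq_le hs ht

end IsStrictlyPositive

lemma exists_isSelfAdjoint_sum_sq_eq_add_algebraMap {ι : Type*} [Fintype ι] (y : ι → A)
    (hy : ∀ k, IsSelfAdjoint (y k)) (hcomm : ∀ k l, Commute (y k) (y l))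
    (hinv : IsUnit (∑ k, y k ^ 2)) {t : ℝ} (ht : 0 ≤ t) :
    ∃ z : ι → A, (∀ k, IsSelfAdjoint (z k)) ∧ (∀ k, ‖y k - z k‖ ^ 2 ≤ t) ∧
      ∑ k, z k ^ 2 = ∑ k, y k ^ 2 + algebraMap ℝ A t := by
  set a := ∑ k, y k ^ 2
  have hy_sq_nonneg : ∀ k, 0 ≤ y k ^ 2 := fun k => (hy k).sq_nonneg
  have hy_sq_le : ∀ k, y k ^ 2 ≤ a := fun k =>
    Finset.single_le_sum (f := fun k => y k ^ 2) (fun l _ => hy_sq_nonneg l) (Finset.mem_univ k)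
  have ha : IsStrictlyPositive a :=
    hinv.isStrictlyPositive (Finset.sum_nonneg fun k _ => hy_sq_nonneg k)
  set c := cfc (radialFactor t) a
  have hyc : ∀ k, Commute (y k) c := fun k =>
    (Commute.cfc_real (Commute.sum_left _ _ _ fun l _ => ((hcomm k l).pow_right 2).symm) _).symm
  refine ⟨fun k => y k * c, fun k => ((hy k).commute_iff (cfc_predicate _ a)).mp (hyc k),
    fun k => ?_, ?_⟩
  · have hsq : star (y k) * y k ≤ a := by rw [(hy k).star_eq, ← sq]; exact hy_sq_le k
    calc ‖y k - y k * c‖ ^ 2 = ‖y k * (1 - c)‖ ^ 2 := by rw [mul_sub, mul_one]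
      _ ≤ ‖star (1 - c) * a * (1 - c)‖ := norm_mul_sq_le_of_star_mul_self_le hsq _
      _ ≤ t := ha.norm_conj_one_sub_cfc_radialFactor_le ht
  · calc ∑ k, (y k * c) ^ 2 = a * c ^ 2 := by
          simp only [fun k => (hyc k).mul_pow 2, Finset.sum_mul, a]
      _ = a + algebraMap ℝ A t := ha.mul_cfc_radialFactor_sq ht

end CStarAlgebra

/-- A pairwise commuting tuple of self-adjoint elements with invertible sum of squares is
`K`-unessential for every `0 < K ≤ 1`: for each rational `δ > 0` there exist self-adjoint
`z_k` with `‖y_k - z_k‖ ≤ δ`, `∑ z_k²` invertible, and `‖(∑ z_k²)⁻¹‖ ≤ 1/(K·δ²) `. -/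
theorem stmt_7 {X : Type*} [CStarAlgebra X] (m : ℕ) (y : Fin m → X)
    (hy : ∀ k, IsSelfAdjoint (y k)) (hcomm : ∀ k l, Commute (y k) (y l))
    (hinv : IsUnit (∑ k, (y k) ^ 2)) (K : ℝ) (hK0 : 0 < K) (hK1 : K ≤ 1) :
    ∀ δ : ℚ, 0 < δ → ∃ z : Fin m → X,
      (∀ k, IsSelfAdjoint (z k)) ∧ (∀ k, ‖y k - z k‖ ≤ (δ : ℝ)) ∧
      ∃ b : X, (∑ k, (z k) ^ 2) * b = 1 ∧ b * (∑ k, (z k) ^ 2) = 1 ∧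
        ‖b‖ ≤ 1 / (K * (δ : ℝ) ^ 2) := by
  let _ := CStarAlgebra.spectralOrder X
  have _ := CStarAlgebra.spectralOrderedRing X
  intro δ hδ
  have hδ : (0 : ℝ) < δ := by exact_mod_cast hδ
  obtain ⟨z, hz, hdist, hsum⟩ :=
    exists_isSelfAdjoint_sum_sq_eq_add_algebraMap y hy hcomm hinv (sq_nonneg (δ : ℝ))
  obtain ⟨b, hb₁, hb₂, hb⟩ := exists_inverse_add_algebraMap_of_nonneg
    (Finset.sum_nonneg fun k _ => (hy k).sq_nonneg) (by positivity : 0 < (δ : ℝ) ^ 2)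
  refine ⟨z, hz, fun k => (pow_le_pow_iff_left₀ (norm_nonneg _) hδ.le two_ne_zero).mp
    (hdist k), b, hsum ▸ hb₁, hsum ▸ hb₂, hb.trans ?_⟩
  rw [one_div]
  exact inv_anti₀ (by positivity) (mul_le_of_le_one_left (sq_nonneg _) hK1)
end

section
/- For a commutative unital C*-algebra X (i.e., X ≅ C(T) for a compact Hausdorff space T) and 0 < K ≤ 1, the bounded rank with respect to K equals the real rank: br_K(X) = rr(X). -/
open WeakDual WeakDual.CharacterSpace in
lemma key_unessential {X : Type*} [CommCStarAlgebra X] {K : ℝ} (hK0 : 0 < K) (hK1 : K ≤ 1)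
    {m : ℕ} (y : Fin m → X) (hy : ∀ k, IsSelfAdjoint (y k))
    (hu : IsUnit (∑ k, (y k) ^ 2)) : KUnessential K y := by
  intro δ hδ
  have hδR : (0:ℝ) < (δ:ℝ) := by exact_mod_cast hδ
  set Φ := gelfandStarTransform X with hΦ
  have hΦnorm : ∀ a : X, ‖Φ a‖ = ‖a‖ := fun a =>
    (gelfandTransform_isometry X).norm_map_of_map_zero (map_zero _) a
  -- the real-valued functions underlying Φ (y k)
  set F : Fin m → characterSpace ℂ X → ℝ := fun k t => (Φ (y k) t).re with hF
  have hreal : ∀ k t, (Φ (y k)) t = (F k t : ℂ) := by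
    intro k t
    have h1 : IsSelfAdjoint (Φ (y k)) := (hy k).map Φ
    have h2 : (starRingEnd ℂ) (Φ (y k) t) = Φ (y k) t := by
      have := congrArg (fun f : C(characterSpace ℂ X, ℂ) => f t) h1.star_eq
      simpa using this
    exact (Complex.conj_eq_iff_re.mp h2).symm
  set s : characterSpace ℂ X → ℝ := fun t => ∑ k, (F k t) ^ 2 with hs
  have hcontF : ∀ k, Continuous (F k) := fun k =>
    Complex.continuous_re.comp (Φ (y k)).continuous
  have hconts : Continuous s :=
    continuous_finset_sum _ fun k _ => ((hcontF k).pow 2)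
  have hA : ∀ t, Φ (∑ k, (y k) ^ 2) t = (s t : ℂ) := by
    intro t
    rw [map_sum]
    rw [ContinuousMap.sum_apply]
    push_cast [hs]
    refine Finset.sum_congr rfl fun k _ => ?_
    rw [map_pow, ContinuousMap.pow_apply, hreal]
  have hspos : ∀ t, 0 < s t := by
    intro t
    rcases hu.map Φ with ⟨u, hu'⟩
    have h1 := congrArg (fun f : C(characterSpace ℂ X, ℂ) => f t) u.mul_inv
    simp only [ContinuousMap.mul_apply, ContinuousMap.one_apply, hu'] at h1
    rw [hA t] at h1
    have hne : (s t : ℂ) ≠ 0 := left_ne_zero_of_mul_eq_one h1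
    have h0 : 0 ≤ s t := Finset.sum_nonneg fun k _ => sq_nonneg _
    rcases h0.lt_or_eq with h | h
    · exact h
    · exact absurd (by rw [← h]; norm_num) hne
  set g : characterSpace ℂ X → ℝ := fun t => max 1 ((δ:ℝ) / Real.sqrt (s t)) with hg
  have hsqrtpos : ∀ t, 0 < Real.sqrt (s t) := fun t => Real.sqrt_pos.mpr (hspos t)
  have hcontg : Continuous g :=
    continuous_const.max (continuous_const.div (Real.continuous_sqrt.comp hconts)
      fun t => (hsqrtpos t).ne')
  have hg1 : ∀ t, (1:ℝ) ≤ g t := fun t => le_max_left _ _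
  have hsg : ∀ t, (δ:ℝ) ^ 2 ≤ s t * (g t) ^ 2 := by
    intro t
    have h1 : (δ:ℝ) / Real.sqrt (s t) ≤ g t := le_max_right _ _
    have h2 := hsqrtpos t
    have h3 : (δ:ℝ) ≤ Real.sqrt (s t) * g t := by
      rw [div_le_iff₀ h2] at h1; linarith [h1]
    have h4 : Real.sqrt (s t) ^ 2 = s t := Real.sq_sqrt (hspos t).le
    nlinarith [h3, h2, hδR]
  have hsgpos : ∀ t, 0 < s t * (g t) ^ 2 := fun t => lt_of_lt_of_le (by positivity) (hsg t)
  set gC : C(characterSpace ℂ X, ℂ) :=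
    ⟨fun t => (g t : ℂ), Complex.continuous_ofReal.comp hcontg⟩ with hgC
  set z : Fin m → X := fun k => Φ.symm (Φ (y k) * gC) with hz
  refine ⟨z, ?_, ?_, ?_⟩
  · -- selfadjoint
    intro k
    have : IsSelfAdjoint (Φ (y k) * gC) := by
      rw [IsSelfAdjoint]
      ext t
      simp only [ContinuousMap.star_apply, ContinuousMap.mul_apply, hreal, hgC,
        ContinuousMap.coe_mk]
      rw [show ((F k t : ℂ) * (g t : ℂ)) = ((F k t * g t : ℝ) : ℂ) by push_cast; ring]
      exact Complex.conj_ofReal _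
    exact this.map Φ.symm
  · -- distance estimate
    intro k
    have heq : Φ (y k - z k) = Φ (y k) * (1 - gC) := by
      rw [map_sub, hz]
      simp only [Φ.apply_symm_apply]
      ring
    have hn : ‖y k - z k‖ = ‖Φ (y k) * (1 - gC)‖ := by rw [← heq, hΦnorm]
    rw [hn]
    rw [ContinuousMap.norm_le _ hδR.le]
    intro t
    simp only [ContinuousMap.mul_apply, ContinuousMap.sub_apply, ContinuousMap.one_apply, hgC,
      ContinuousMap.coe_mk, hreal]
    rw [show ((F k t : ℂ) * (1 - (g t : ℂ))) = ((F k t * (1 - g t) : ℝ) : ℂ) by push_cast; ring]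
    rw [Complex.norm_real, Real.norm_eq_abs]
    -- pointwise real estimate
    have hr2 : (F k t) ^ 2 ≤ s t := by
      rw [hs]
      exact Finset.single_le_sum (fun j _ => sq_nonneg (F j t)) (Finset.mem_univ k)
    have habs : |F k t| ≤ Real.sqrt (s t) := by
      rw [← Real.sqrt_sq_eq_abs]
      exact Real.sqrt_le_sqrt hr2
    rcases le_or_gt ((δ:ℝ) / Real.sqrt (s t)) 1 with h | h
    · have : g t = 1 := max_eq_left h
      simp [this, hδR.le]
    · have hgt : g t = (δ:ℝ) / Real.sqrt (s t) := max_eq_right h.le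
      have h2 := hsqrtpos t
      rw [abs_mul, hgt]
      have h5 : |1 - (δ:ℝ) / Real.sqrt (s t)| = (δ:ℝ) / Real.sqrt (s t) - 1 := by
        rw [abs_of_nonpos (by linarith)]; ring
      rw [h5]
      have h6 : |F k t| * ((δ:ℝ) / Real.sqrt (s t) - 1) ≤
          Real.sqrt (s t) * ((δ:ℝ) / Real.sqrt (s t) - 1) := by
        apply mul_le_mul_of_nonneg_right habs (by linarith)
      calc |F k t| * ((δ:ℝ) / Real.sqrt (s t) - 1)
          ≤ Real.sqrt (s t) * ((δ:ℝ) / Real.sqrt (s t) - 1) := h6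
        _ = (δ:ℝ) - Real.sqrt (s t) := by field_simp
        _ ≤ (δ:ℝ) := by linarith [h2]
  · -- inverse
    have hW : (∑ k, (z k) ^ 2) = Φ.symm (Φ (∑ k, (y k) ^ 2) * gC ^ 2) := by
      rw [hz]
      simp only [← map_pow Φ.symm, ← map_sum Φ.symm]
      congr 1
      rw [map_sum]
      simp only [mul_pow, map_pow, Finset.sum_mul]
    set hinv : C(characterSpace ℂ X, ℂ) :=
      ⟨fun t => (((s t * (g t) ^ 2)⁻¹ : ℝ) : ℂ),
        Complex.continuous_ofReal.comp ((hconts.mul (hcontg.pow 2)).inv₀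
          fun t => (hsgpos t).ne')⟩ with hhinv
    refine ⟨Φ.symm hinv, ?_, ?_, ?_⟩
    · rw [hW, ← map_mul, ← map_one Φ.symm]
      congr 1
      ext t
      simp only [ContinuousMap.mul_apply, ContinuousMap.pow_apply, ContinuousMap.one_apply,
        hhinv, ContinuousMap.coe_mk, hgC, hA]
      rw [show ((s t : ℂ) * (g t : ℂ) ^ 2) = ((s t * (g t) ^ 2 : ℝ) : ℂ) by push_cast; ring]
      rw [← Complex.ofReal_mul, mul_inv_cancel₀ (hsgpos t).ne']
      norm_num
    · rw [hW, ← map_mul, ← map_one Φ.symm]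
      congr 1
      ext t
      simp only [ContinuousMap.mul_apply, ContinuousMap.pow_apply, ContinuousMap.one_apply,
        hhinv, ContinuousMap.coe_mk, hgC, hA]
      rw [show ((s t : ℂ) * (g t : ℂ) ^ 2) = ((s t * (g t) ^ 2 : ℝ) : ℂ) by push_cast; ring]
      rw [← Complex.ofReal_mul, inv_mul_cancel₀ (hsgpos t).ne']
      norm_num
    · have hbn : ‖Φ.symm hinv‖ = ‖hinv‖ := by
        rw [← hΦnorm (Φ.symm hinv), Φ.apply_symm_apply]
      rw [hbn]
      have hC : (0:ℝ) ≤ 1 / (K * (δ:ℝ) ^ 2) := by positivity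
      rw [ContinuousMap.norm_le _ hC]
      intro t
      simp only [hhinv, ContinuousMap.coe_mk, Complex.norm_real, Real.norm_eq_abs]
      rw [abs_of_nonneg (inv_nonneg.mpr (hsgpos t).le)]
      have h1 : (s t * (g t) ^ 2)⁻¹ ≤ ((δ:ℝ) ^ 2)⁻¹ :=
        inv_anti₀ (by positivity) (hsg t)
      have h2 : ((δ:ℝ) ^ 2)⁻¹ ≤ 1 / (K * (δ:ℝ) ^ 2) := by
        rw [one_div]
        apply inv_anti₀ (by positivity)
        nlinarith [hδR]
      linarith

/-- For a commutative unital C*-algebra and `0 < K ≤ 1`, bounded rank with respect to `K`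
equals real rank: for every `n`, `br_K(X) ≤ n` iff `rr(X) ≤ n`. -/
theorem stmt_8 {X : Type*} [CommCStarAlgebra X] (K : ℝ) (hK0 : 0 < K) (hK1 : K ≤ 1) (n : ℕ) :
    (∀ x : Fin (n + 1) → X, (∀ k, IsSelfAdjoint (x k)) → ∀ ε : ℝ, 0 < ε →
      ∃ y : Fin (n + 1) → X, (∀ k, IsSelfAdjoint (y k)) ∧ KUnessential K y ∧
        ∀ k, ‖x k - y k‖ < ε) ↔
    (∀ x : Fin (n + 1) → X, (∀ k, IsSelfAdjoint (x k)) → ∀ ε : ℝ, 0 < ε →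
      ∃ y : Fin (n + 1) → X, (∀ k, IsSelfAdjoint (y k)) ∧
        IsUnit (∑ k, (y k) ^ 2) ∧ ∀ k, ‖x k - y k‖ < ε) := by
  constructor
  · intro hbr x hx ε hε
    obtain ⟨y, hysa, hyK, hyx⟩ := hbr x hx (ε / 2) (by linarith)
    obtain ⟨δ, hδ0, hδε⟩ := exists_rat_btwn (show (0:ℝ) < ε / 2 by linarith)
    have hδ0' : 0 < δ := by exact_mod_cast hδ0
    obtain ⟨z, hzsa, hzy, b, hb1, hb2, _⟩ := hyK δ hδ0'
    refine ⟨z, hzsa, ⟨⟨_, b, hb1, hb2⟩, rfl⟩, fun k => ?_⟩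
    calc ‖x k - z k‖ ≤ ‖x k - y k‖ + ‖y k - z k‖ := by
          simpa using norm_sub_le_norm_sub_add_norm_sub (x k) (y k) (z k)
      _ < ε / 2 + (δ:ℝ) := by have := hyx k; have := hzy k; linarith
      _ < ε := by linarith
  · intro hrr x hx ε hε
    obtain ⟨y, hysa, hyu, hyx⟩ := hrr x hx ε hε
    exact ⟨y, hysa, key_unessential hK0 hK1 y hysa hyu, hyx⟩
end

section
/- Let X be a unital C*-algebra with rr(X) = 0 and 0 < K ≤ 1. Then br_K(X) = 0, i.e., every self-adjoint element of X can be approximated in norm by self-adjoint elements y such that for every rational δ > 0 there is a self-adjoint z with ‖y − z‖ ≤ δ, z² invertible, and ‖(z²)^{-1}‖ ≤ 1/(K·δ²). -/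
/-!
Approximate `x` by an invertible self-adjoint `y`. Since `0 ∉ σ(y)`, the map
`t ↦ sign t · max |t| δ`, which moves every point by at most `δ` and is continuous off `0`, can be
applied to `y` by continuous functional calculus; the result `z` satisfies `‖y - z‖ ≤ δ` and
`σ(z²) ⊆ [δ², ∞)`, so `z²` is invertible with `‖(z²)⁻¹‖ ≤ 1/δ² ≤ 1/(K δ²)`.
-/

noncomputable def pushOff (δ t : ℝ) : ℝ := t / |t| * max |t| δ

lemma abs_pushOff {δ t : ℝ} (ht : t ≠ 0) : |pushOff δ t| = max |t| δ := by
  have hδt : 0 ≤ max |t| δ := (abs_nonneg t).trans (le_max_left _ _)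
  rw [pushOff, abs_mul, abs_div, abs_abs, div_self (abs_ne_zero.mpr ht), one_mul,
    abs_of_nonneg hδt]

lemma abs_sub_pushOff_le {δ : ℝ} (hδ : 0 ≤ δ) (t : ℝ) : |t - pushOff δ t| ≤ δ := by
  rcases eq_or_ne t 0 with rfl | ht
  · simpa [pushOff] using hδ
  have hsplit : t - pushOff δ t = t / |t| * (|t| - max |t| δ) := by
    rw [pushOff, mul_sub, div_mul_cancel₀ _ (abs_ne_zero.mpr ht)]
  rw [hsplit, abs_mul, abs_div, abs_abs, div_self (abs_ne_zero.mpr ht), one_mul,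
    abs_sub_comm, abs_le]
  constructor <;> cases max_cases |t| δ <;> linarith [abs_nonneg t]

lemma continuousOn_pushOff (δ : ℝ) : ContinuousOn (pushOff δ) {0}ᶜ := by
  unfold pushOff
  fun_prop (disch := intro t ht; exact abs_ne_zero.mpr ht)

lemma exists_inverse_cfc_norm_le {A : Type*} [CStarAlgebra A] {f : ℝ → ℝ} {a : A}
    (ha : IsSelfAdjoint a) (hf : ContinuousOn f (spectrum ℝ a)) {c : ℝ} (hc : 0 < c)
    (hfc : ∀ t ∈ spectrum ℝ a, c ≤ |f t|) :
    ∃ b : A, cfc f a * b = 1 ∧ b * cfc f a = 1 ∧ ‖b‖ ≤ c⁻¹ := by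
  have hf0 : ∀ t ∈ spectrum ℝ a, f t ≠ 0 := fun t ht =>
    abs_pos.mp (hc.trans_le (hfc t ht))
  refine ⟨cfc (fun t => (f t)⁻¹) a, (cfcUnits f a hf0).val_inv, (cfcUnits f a hf0).inv_val,
    norm_cfc_le (inv_nonneg.mpr hc.le) fun t ht => ?_⟩
  rw [norm_inv, Real.norm_eq_abs]
  exact inv_anti₀ hc (hfc t ht)

theorem IsSelfAdjoint.exists_near_sq_inverse_norm_le {A : Type*} [CStarAlgebra A] {a : A}
    (ha : IsSelfAdjoint a) (hu : IsUnit a) {δ : ℝ} (hδ : 0 < δ) :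
    ∃ z : A, IsSelfAdjoint z ∧ ‖a - z‖ ≤ δ ∧
      ∃ b : A, z ^ 2 * b = 1 ∧ b * z ^ 2 = 1 ∧ ‖b‖ ≤ (δ ^ 2)⁻¹ := by
  have hspec : spectrum ℝ a ⊆ {0}ᶜ :=
    Set.subset_compl_singleton_iff.mpr (spectrum.zero_notMem ℝ hu)
  have hcont : ContinuousOn (pushOff δ) (spectrum ℝ a) := (continuousOn_pushOff δ).mono hspec
  refine ⟨cfc (pushOff δ) a, cfc_predicate _ a, ?_, ?_⟩
  · nth_rw 1 [← cfc_id' ℝ a]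
    rw [← cfc_sub ..]
    exact norm_cfc_le hδ.le fun t _ => abs_sub_pushOff_le hδ.le t
  · rw [← cfc_pow ..]
    refine exists_inverse_cfc_norm_le ha (hcont.pow 2) (by positivity) fun t ht => ?_
    rw [Pi.pow_apply, abs_pow, abs_pushOff (hspec ht)]
    exact pow_le_pow_left₀ hδ.le (le_max_right _ _) 2

/-- If `X` has real rank zero (every self-adjoint element is a norm limit of invertible
self-adjoint elements) and `0 < K ≤ 1`, then `br_K(X) = 0`: every self-adjoint element can
be approximated by self-adjoint `y` such that for each rational `δ > 0` there is a
self-adjoint `z` with `‖y - z‖ ≤ δ`, `z²` invertible and `‖(z²)⁻¹‖ ≤ 1/(K·δ²)`. -/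
theorem stmt_9 {X : Type*} [CStarAlgebra X] (K : ℝ) (hK0 : 0 < K) (hK1 : K ≤ 1)
    (hrr : ∀ x : X, IsSelfAdjoint x → ∀ ε : ℝ, 0 < ε →
      ∃ y : X, IsSelfAdjoint y ∧ IsUnit y ∧ ‖x - y‖ < ε) :
    ∀ x : X, IsSelfAdjoint x → ∀ ε : ℝ, 0 < ε →
      ∃ y : X, IsSelfAdjoint y ∧ (∀ δ : ℚ, 0 < δ →
        ∃ z : X, IsSelfAdjoint z ∧ ‖y - z‖ ≤ (δ : ℝ) ∧
          ∃ b : X, z ^ 2 * b = 1 ∧ b * z ^ 2 = 1 ∧ ‖b‖ ≤ 1 / (K * (δ : ℝ) ^ 2)) ∧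
      ‖x - y‖ < ε := by
  intro x hx ε hε
  obtain ⟨y, hy, hyu, hxy⟩ := hrr x hx ε hε
  refine ⟨y, hy, fun δ hδ => ?_, hxy⟩
  have hδ' : (0 : ℝ) < δ := by exact_mod_cast hδ
  obtain ⟨z, hz, hyz, b, hzb, hbz, hb⟩ := hy.exists_near_sq_inverse_norm_le hyu hδ'
  refine ⟨z, hz, hyz, b, hzb, hbz, hb.trans ?_⟩
  rw [one_div]
  exact inv_anti₀ (by positivity) (mul_le_of_le_one_left (by positivity) hK1)
end

section
/- Let K > 0 and p : X → Y a surjective unital *-homomorphism of unital C*-algebras. Then br_K(Y) ≤ br_K(X): if every (n+1)-tuple of self-adjoint elements of X admits coordinate-wise norm-ε approximation by K-unessential (n+1)-tuples, the same holds in Y. -/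
/-! Lift the self-adjoint tuple of `Y` to a self-adjoint tuple of `X` (via real parts),
approximate it there by a `K`-unessential tuple, and push everything back down with `p`:
a unital *-homomorphism of C*-algebras is contractive and preserves invertibility, so it maps
approximations to approximations and `K`-unessential tuples to `K`-unessential tuples. -/

open ComplexStarModule

theorem exists_isSelfAdjoint_map_eq_of_surjective {A B F : Type*}
    [AddCommGroup A] [Module ℂ A] [StarAddMonoid A] [StarModule ℂ A]
    [AddCommGroup B] [Module ℂ B] [StarAddMonoid B] [StarModule ℂ B]
    [FunLike F A B] [StarHomClass F A B] [LinearMapClass F ℂ A B]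
    {f : F} (hf : Function.Surjective f) {y : B} (hy : IsSelfAdjoint y) :
    ∃ x : A, IsSelfAdjoint x ∧ f x = y := by
  obtain ⟨a, rfl⟩ := hf y
  exact ⟨ℜ a, (ℜ a).property, by rw [map_realPart, hy.coe_realPart]⟩

theorem KUnessential.map {X Y : Type*} [CStarAlgebra X] [CStarAlgebra Y] (p : X →⋆ₐ[ℂ] Y)
    {K : ℝ} {m : ℕ} {y : Fin m → X} (hy : KUnessential K y) : KUnessential K (fun k => p (y k)) := by
  intro δ hδ
  obtain ⟨z, hz, hyz, b, hzb, hbz, hb⟩ := hy δ hδ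
  have hsum : ∑ k, p (z k) ^ 2 = p (∑ k, z k ^ 2) := by simp only [map_sum, map_pow]
  refine ⟨fun k => p (z k), fun k => (hz k).map p, fun k => ?_, p b, ?_, ?_,
    (NonUnitalStarAlgHom.norm_apply_le p b).trans hb⟩
  · calc ‖p (y k) - p (z k)‖ = ‖p (y k - z k)‖ := by rw [map_sub]
      _ ≤ ‖y k - z k‖ := NonUnitalStarAlgHom.norm_apply_le p _
      _ ≤ δ := hyz k
  · rw [hsum, ← map_mul, hzb, map_one]
  · rw [hsum, ← map_mul, hbz, map_one]

theorem stmt_11_general {X Y : Type*} [CStarAlgebra X] [CStarAlgebra Y]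
    (p : X →⋆ₐ[ℂ] Y) (hp : Function.Surjective p) (K : ℝ) (n : ℕ)
    (hX : ∀ x : Fin (n + 1) → X, (∀ k, IsSelfAdjoint (x k)) → ∀ ε : ℝ, 0 < ε →
      ∃ y : Fin (n + 1) → X, (∀ k, IsSelfAdjoint (y k)) ∧ KUnessential K y ∧
        ∀ k, ‖x k - y k‖ < ε) :
    ∀ x : Fin (n + 1) → Y, (∀ k, IsSelfAdjoint (x k)) → ∀ ε : ℝ, 0 < ε →
      ∃ y : Fin (n + 1) → Y, (∀ k, IsSelfAdjoint (y k)) ∧ KUnessential K y ∧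
        ∀ k, ‖x k - y k‖ < ε := by
  intro x hx ε hε
  choose a ha hpa using fun k => exists_isSelfAdjoint_map_eq_of_surjective hp (hx k)
  obtain ⟨y, hy, hyK, hay⟩ := hX a ha ε hε
  refine ⟨fun k => p (y k), fun k => (hy k).map p, hyK.map p, fun k => ?_⟩
  calc ‖x k - p (y k)‖ = ‖p (a k - y k)‖ := by rw [map_sub, hpa]
    _ ≤ ‖a k - y k‖ := NonUnitalStarAlgHom.norm_apply_le p _
    _ < ε := hay k

/-- If `p : X → Y` is a surjective unital *-homomorphism, then `br_K(Y) ≤ br_K(X)`. -/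
theorem stmt_11 {X Y : Type*} [CStarAlgebra X] [CStarAlgebra Y]
    (p : X →⋆ₐ[ℂ] Y) (hp : Function.Surjective p) (K : ℝ) (hK : 0 < K) (n : ℕ)
    (hX : ∀ x : Fin (n + 1) → X, (∀ k, IsSelfAdjoint (x k)) → ∀ ε : ℝ, 0 < ε →
      ∃ y : Fin (n + 1) → X, (∀ k, IsSelfAdjoint (y k)) ∧ KUnessential K y ∧
        ∀ k, ‖x k - y k‖ < ε) :
    ∀ x : Fin (n + 1) → Y, (∀ k, IsSelfAdjoint (x k)) → ∀ ε : ℝ, 0 < ε →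
      ∃ y : Fin (n + 1) → Y, (∀ k, IsSelfAdjoint (y k)) ∧ KUnessential K y ∧
        ∀ k, ‖x k - y k‖ < ε :=
  stmt_11_general p hp K n hX
end

section
/- Let K > 0 and let X be a unital C*-algebra which is the closure of an increasing union of unital C*-subalgebras X_α (directed by inclusion). If br_K(X_α) ≤ n for each α, then br_K(X) ≤ n. -/
open ComplexStarModule

/-- A tuple of self-adjoint elements is `K`-unessential with witnesses in a subset `S`. -/
def KUnessentialIn {X : Type*} [CStarAlgebra X] (K : ℝ) (S : Set X) {m : ℕ}
    (y : Fin m → X) : Prop :=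
  ∀ δ : ℚ, 0 < δ → ∃ z : Fin m → X, (∀ k, z k ∈ S) ∧
    (∀ k, IsSelfAdjoint (z k)) ∧ (∀ k, ‖y k - z k‖ ≤ (δ : ℝ)) ∧
    ∃ b : X, b ∈ S ∧ (∑ k, (z k) ^ 2) * b = 1 ∧ b * (∑ k, (z k) ^ 2) = 1 ∧
      ‖b‖ ≤ 1 / (K * (δ : ℝ) ^ 2)

theorem KUnessentialIn.mono {X : Type*} [CStarAlgebra X] {K : ℝ} {S T : Set X} {m : ℕ}
    {y : Fin m → X} (hy : KUnessentialIn K S y) (hST : S ⊆ T) : KUnessentialIn K T y := by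
  intro δ hδ
  obtain ⟨z, hzS, hzsa, hyz, b, hbS, hb⟩ := hy δ hδ
  exact ⟨z, fun k => hST (hzS k), hzsa, hyz, b, hST hbS, hb⟩

theorem Dense.exists_forall_mem_dist_lt_of_directed {α ι κ : Type*} [PseudoMetricSpace α]
    [Fintype κ] [Nonempty κ] {S : ι → Set α} (hdir : Directed (· ⊆ ·) S)
    (hdense : Dense (⋃ i, S i)) (x : κ → α) {ε : ℝ} (hε : 0 < ε) :
    ∃ j, ∃ a : κ → α, (∀ k, a k ∈ S j) ∧ ∀ k, dist (x k) (a k) < ε := by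
  classical
  choose a haS hxa using fun k => Metric.mem_closure_iff.mp (hdense (x k)) ε hε
  have : Nonempty ι := (Set.mem_iUnion.mp (haS (Classical.arbitrary κ))).nonempty
  obtain ⟨j, hj⟩ := hdir.exists_mem_subset_of_finset_subset_biUnion
    (s := Finset.univ.image a) (by simpa [Set.subset_def] using haS)
  exact ⟨j, a, fun k => hj (by simp), hxa⟩

theorem StarSubalgebra.realPart_mem {A : Type*} [Ring A] [StarRing A] [Algebra ℂ A]
    [StarModule ℂ A] (S : StarSubalgebra ℂ A) {a : A} (ha : a ∈ S) : (ℜ a : A) ∈ S := by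
  rw [realPart_apply_coe, ← Complex.coe_smul]
  exact S.smul_mem (add_mem ha (star_mem ha)) _

theorem IsSelfAdjoint.norm_sub_realPart_le {A : Type*} [SeminormedAddCommGroup A]
    [StarAddMonoid A] [NormedSpace ℂ A] [StarModule ℂ A] [NormedStarGroup A] {x : A}
    (hx : IsSelfAdjoint x) (a : A) : ‖x - ℜ a‖ ≤ ‖x - a‖ := by
  have : x - ℜ a = ℜ (x - a) := by rw [map_sub, AddSubgroupClass.coe_sub, hx.coe_realPart]
  exact this ▸ realPart.norm_le (x - a)

theorem exists_isSelfAdjoint_forall_mem_norm_sub_lt {X ι κ : Type*} [CStarAlgebra X]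
    [Fintype κ] [Nonempty κ] {S : ι → StarSubalgebra ℂ X} (hdir : Directed (· ≤ ·) S)
    (hdense : Dense (⋃ i, (S i : Set X))) {x : κ → X} (hx : ∀ k, IsSelfAdjoint (x k))
    {ε : ℝ} (hε : 0 < ε) :
    ∃ j, ∃ x' : κ → X, (∀ k, x' k ∈ S j) ∧ (∀ k, IsSelfAdjoint (x' k)) ∧
      ∀ k, ‖x k - x' k‖ < ε := by
  obtain ⟨j, a, haS, hxa⟩ :=
    hdense.exists_forall_mem_dist_lt_of_directed (hdir.mono_comp _ fun _ _ h => h) x hε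
  refine ⟨j, fun k => ℜ (a k), fun k => (S j).realPart_mem (haS k),
    fun k => (ℜ (a k)).property, fun k => ?_⟩
  exact ((hx k).norm_sub_realPart_le (a k)).trans_lt (dist_eq_norm (x k) (a k) ▸ hxa k)

theorem stmt_13_general {X : Type*} [CStarAlgebra X] {ι : Type*} (S : ι → StarSubalgebra ℂ X)
    (hdir : Directed (· ≤ ·) S) (hdense : Dense (⋃ i, (S i : Set X)))
    (K : ℝ) (n : ℕ)
    (h : ∀ i, ∀ x : Fin (n + 1) → X, (∀ k, x k ∈ S i) → (∀ k, IsSelfAdjoint (x k)) →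
      ∀ ε : ℝ, 0 < ε → ∃ y : Fin (n + 1) → X, (∀ k, y k ∈ S i) ∧
        (∀ k, IsSelfAdjoint (y k)) ∧ KUnessentialIn K (S i : Set X) y ∧
        ∀ k, ‖x k - y k‖ < ε) :
    ∀ x : Fin (n + 1) → X, (∀ k, IsSelfAdjoint (x k)) → ∀ ε : ℝ, 0 < ε →
      ∃ y : Fin (n + 1) → X, (∀ k, IsSelfAdjoint (y k)) ∧
        KUnessentialIn K (Set.univ : Set X) y ∧ ∀ k, ‖x k - y k‖ < ε := by
  intro x hx ε hε
  obtain ⟨j, x', hx'S, hx'sa, hxx'⟩ :=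
    exists_isSelfAdjoint_forall_mem_norm_sub_lt hdir hdense hx (half_pos hε)
  obtain ⟨y, -, hysa, hyK, hx'y⟩ := h j x' hx'S hx'sa (ε / 2) (half_pos hε)
  refine ⟨y, hysa, hyK.mono (Set.subset_univ _), fun k => ?_⟩
  calc ‖x k - y k‖ ≤ ‖x k - x' k‖ + ‖x' k - y k‖ := norm_sub_le_norm_sub_add_norm_sub _ _ _
    _ < ε / 2 + ε / 2 := add_lt_add (hxx' k) (hx'y k)
    _ = ε := add_halves ε

/-- If a unital C*-algebra `X` is the closure of the union of a directed family of unital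
C*-subalgebras `X_α` with `br_K(X_α) ≤ n` for each `α`, then `br_K(X) ≤ n`. -/
theorem stmt_13 {X : Type*} [CStarAlgebra X] {ι : Type*} (S : ι → StarSubalgebra ℂ X)
    (hdir : Directed (· ≤ ·) S) (hdense : Dense (⋃ i, (S i : Set X)))
    (K : ℝ) (hK : 0 < K) (n : ℕ)
    (h : ∀ i, ∀ x : Fin (n + 1) → X, (∀ k, x k ∈ S i) → (∀ k, IsSelfAdjoint (x k)) →
      ∀ ε : ℝ, 0 < ε → ∃ y : Fin (n + 1) → X, (∀ k, y k ∈ S i) ∧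
        (∀ k, IsSelfAdjoint (y k)) ∧ KUnessentialIn K (S i : Set X) y ∧
        ∀ k, ‖x k - y k‖ < ε) :
    ∀ x : Fin (n + 1) → X, (∀ k, IsSelfAdjoint (x k)) → ∀ ε : ℝ, 0 < ε →
      ∃ y : Fin (n + 1) → X, (∀ k, IsSelfAdjoint (y k)) ∧
        KUnessentialIn K (Set.univ : Set X) y ∧ ∀ k, ‖x k - y k‖ < ε :=
  stmt_13_general S hdir hdense K n h
end

section
/- Let X be a unital C*-algebra and x a positive element. For every δ > 0 there exists a positive invertible element z ∈ C*(x, 1) with ‖z − x‖ < δ. Consequently, if the squaring-type map α_{n+1} : (X_sa)^{n+1} → X_+, (x_1,...,x_{n+1}) ↦ ∑ x_k², is open, then X has real rank at most n. -/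
/-!
Adding a small scalar `c > 0` to a positive `x` moves its spectrum into `[c, ∞)`, so
`x + c` is invertible, lies in `C*(x, 1)` and is at distance at most `c` from `x`. Applying
this to `∑ x_k²`, openness of `α_{n+1}` writes the invertible perturbation as `∑ y_k²` with
each `y_k` close to `x_k`.
-/

theorem norm_algebraMap_le_of_cstarRing {𝕜 A : Type*} [NormedField 𝕜] [NormedRing A]
    [StarRing A] [CStarRing A] [NormedAlgebra 𝕜 A] (c : 𝕜) : ‖algebraMap 𝕜 A c‖ ≤ ‖c‖ := by
  rcases subsingleton_or_nontrivial A with _ | _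
  · simp [Subsingleton.elim (algebraMap 𝕜 A c) 0]
  · exact (norm_algebraMap' A c).le

section

variable {A : Type*} [CStarAlgebra A] [PartialOrder A] [StarOrderedRing A]

theorem exists_isStrictlyPositive_mem_elemental_norm_sub_lt {x : A} (hx : 0 ≤ x) {δ : ℝ}
    (hδ : 0 < δ) :
    ∃ z ∈ StarAlgebra.elemental ℂ x, IsStrictlyPositive z ∧ ‖z - x‖ < δ := by
  refine ⟨x + algebraMap ℝ A (δ / 2), ?_, ?_, ?_⟩
  · exact add_mem (StarAlgebra.elemental.self_mem ℂ x)
      (StarSubalgebra.algebraMap_mem _ (algebraMap ℝ ℂ (δ / 2)))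
  · exact IsStrictlyPositive.nonneg_add hx (isStrictlyPositive_algebraMap (half_pos hδ))
  · calc ‖x + algebraMap ℝ A (δ / 2) - x‖ = ‖algebraMap ℝ A (δ / 2)‖ := by
          rw [add_sub_cancel_left]
      _ ≤ ‖δ / 2‖ := norm_algebraMap_le_of_cstarRing _
      _ < δ := by rw [Real.norm_of_nonneg (half_pos hδ).le]; exact half_lt_self hδ

theorem exists_isUnit_sum_sq_of_lift {ι : Type*} [Fintype ι] {x : ι → A}
    (hx : ∀ k, IsSelfAdjoint (x k)) {ε δ : ℝ} (hδ : 0 < δ)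
    (hlift : ∀ y : A, 0 ≤ y → ‖y - ∑ k, x k ^ 2‖ < δ →
      ∃ y' : ι → A, (∀ k, IsSelfAdjoint (y' k)) ∧ ∑ k, y' k ^ 2 = y ∧ ∀ k, ‖y' k - x k‖ < ε) :
    ∃ y : ι → A, (∀ k, IsSelfAdjoint (y k)) ∧ IsUnit (∑ k, y k ^ 2) ∧ ∀ k, ‖x k - y k‖ < ε := by
  have hsum : 0 ≤ ∑ k, x k ^ 2 := Finset.sum_nonneg fun k _ => (hx k).sq_nonneg
  obtain ⟨z, -, hz, hzx⟩ := exists_isStrictlyPositive_mem_elemental_norm_sub_lt hsum hδ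
  obtain ⟨y, hy, rfl, hyx⟩ := hlift z hz.nonneg hzx
  exact ⟨y, hy, hz.isUnit, fun k => norm_sub_rev (x k) (y k) ▸ hyx k⟩

end

/-- (1) For a positive element `x` of a unital C*-algebra and `δ > 0` there exists a positive
invertible `z ∈ C*(x,1)` with `‖z - x‖ < δ`. (2) Consequently, if the squaring map
`α_{n+1} : (X_sa)^{n+1} → X₊`, `(x_k) ↦ ∑ x_k²`, is open (in the ε-δ sense below), then
`X` has real rank at most `n`. -/
theorem stmt_14 {X : Type*} [CStarAlgebra X] [PartialOrder X] [StarOrderedRing X] (n : ℕ) :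
    (∀ x : X, 0 ≤ x → ∀ δ : ℝ, 0 < δ →
      ∃ z : X, z ∈ StarAlgebra.elemental ℂ x ∧ 0 ≤ z ∧ IsUnit z ∧ ‖z - x‖ < δ) ∧
    ((∀ x : Fin (n + 1) → X, (∀ k, IsSelfAdjoint (x k)) → ∀ ε : ℝ, 0 < ε →
        ∃ δ : ℝ, 0 < δ ∧ ∀ y : X, 0 ≤ y → ‖y - ∑ k, (x k) ^ 2‖ < δ →
          ∃ y' : Fin (n + 1) → X, (∀ k, IsSelfAdjoint (y' k)) ∧
            (∑ k, (y' k) ^ 2) = y ∧ ∀ k, ‖y' k - x k‖ < ε) →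
      ∀ x : Fin (n + 1) → X, (∀ k, IsSelfAdjoint (x k)) → ∀ ε : ℝ, 0 < ε →
        ∃ y : Fin (n + 1) → X, (∀ k, IsSelfAdjoint (y k)) ∧
          IsUnit (∑ k, (y k) ^ 2) ∧ ∀ k, ‖x k - y k‖ < ε) := by
  refine ⟨fun x hx δ hδ => ?_, fun hopen x hx ε hε => ?_⟩
  · obtain ⟨z, hzx, hz, hzδ⟩ := exists_isStrictlyPositive_mem_elemental_norm_sub_lt hx hδ
    exact ⟨z, hzx, hz.nonneg, hz.isUnit, hzδ⟩
  · obtain ⟨δ, hδ, hlift⟩ := hopen x hx ε hε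
    exact exists_isUnit_sum_sq_of_lift hx hδ hlift
end
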